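/- The Hom-category H̃(M_k) with tensor product (M,μ)⊗(N,ν)=(M⊗N,μ⊗ν), unit (k,id), associativity constraint ã_{A,B,C}((a⊗b)⊗c)=α(a)⊗(b⊗γ^{-1}(c)), and unit constraints l̃(x⊗a)=xα(a)=r̃(a⊗x) is a monoidal category (the pentagon and triangle axioms hold). -/
import Mathlib


open TensorProduct

/-- The Hom-associativity constraint `ã_{A,B,C} : (A⊗B)⊗C → A⊗(B⊗C)`,
`(a⊗b)⊗c ↦ α(a) ⊗ (b ⊗ γ⁻¹(c))`. -/
noncomputable def homAssoc {k : Type*} [CommRing k] {A B C : Type*}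
    [AddCommGroup A] [Module k A] [AddCommGroup B] [Module k B]
    [AddCommGroup C] [Module k C] (α : A ≃ₗ[k] A) (γ : C ≃ₗ[k] C) :
    (A ⊗[k] B) ⊗[k] C →ₗ[k] A ⊗[k] (B ⊗[k] C) :=
  (TensorProduct.assoc k A B C).toLinearMap ∘ₗ
    TensorProduct.map (TensorProduct.map α.toLinearMap LinearMap.id) γ.symm.toLinearMap

/-- The Hom-left unit constraint `l̃_B : k ⊗ B → B`, `x ⊗ b ↦ x • β(b)`. -/
noncomputable def homLeftUnitor {k : Type*} [CommRing k] {B : Type*}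
    [AddCommGroup B] [Module k B] (β : B ≃ₗ[k] B) : k ⊗[k] B →ₗ[k] B :=
  β.toLinearMap ∘ₗ (TensorProduct.lid k B).toLinearMap

/-- The Hom-right unit constraint `r̃_A : A ⊗ k → A`, `a ⊗ x ↦ x • α(a)`. -/
noncomputable def homRightUnitor {k : Type*} [CommRing k] {A : Type*}
    [AddCommGroup A] [Module k A] (α : A ≃ₗ[k] A) : A ⊗[k] k →ₗ[k] A :=
  α.toLinearMap ∘ₗ (TensorProduct.rid k A).toLinearMap

/-- The Hom-category `H̃(M_k)` with tensor product `(M,μ)⊗(N,ν)=(M⊗N,μ⊗ν)`,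
unit `(k,id)`, associativity constraint `ã` and unit constraints `l̃`, `r̃` is a monoidal
category: the pentagon and triangle axioms hold. -/
theorem homCategory_pentagon_triangle {k : Type*} [CommRing k]
    {A B C D : Type*} [AddCommGroup A] [Module k A] [AddCommGroup B] [Module k B]
    [AddCommGroup C] [Module k C] [AddCommGroup D] [Module k D]
    (α : A ≃ₗ[k] A) (β : B ≃ₗ[k] B) (γ : C ≃ₗ[k] C) (δ : D ≃ₗ[k] D) :
    -- pentagon
    (homAssoc (B := B) α (TensorProduct.congr γ δ) ∘ₗ
        homAssoc (B := C) (TensorProduct.congr α β) δ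
      = TensorProduct.map (LinearMap.id (M := A)) (homAssoc (B := C) β δ) ∘ₗ
          homAssoc (B := B ⊗[k] C) α δ ∘ₗ
            TensorProduct.map (homAssoc (B := B) α γ) (LinearMap.id (M := D))) ∧
    -- triangle
    (TensorProduct.map (LinearMap.id (M := A)) (homLeftUnitor β) ∘ₗ
        homAssoc (B := k) α β
      = TensorProduct.map (homRightUnitor α) (LinearMap.id (M := B))) := by
  constructor
  · ext a b c d
    simp [homAssoc, TensorProduct.congr]
  · ext a x
    simp [homAssoc, homLeftUnitor, homRightUnitor, TensorProduct.smul_tmul']
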